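/- arXiv:1301.1197 — 2 statements merged into one kernel-verified Lean document; each statement's English description precedes it below -/
import Mathlib

section
/- There is no sequence (B_i)_{i∈ℕ} of subsets of the Cantor space 2^ℕ, each having the Baire property, that separates E₀, i.e., such that for all x, y ∈ 2^ℕ one has x E₀ y if and only if (for every i ∈ ℕ, x ∈ B_i ↔ y ∈ B_i). -/
/-- `E₀`: eventual equality on Cantor space. -/
def E0 (x y : ℕ → Bool) : Prop := ∃ N : ℕ, ∀ n ≥ N, x n = y n

/-!
An `E₀`-invariant set `A` with the Baire property is meagre or comeagre (topological zero-one
law): if `A` is comeagre in some basic cylinder, then the countably many homeomorphisms flipping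
finitely many bits preserve `A` and move that cylinder over the whole space. A countable family
of such sets is therefore constant on a comeagre set, which then lies in a single `E₀`-class.
But `E₀`-classes are countable and Cantor space has no isolated points, so they are meagre,
contradicting the Baire category theorem.
-/

open Set Filter Topology PiNat

theorem exists_forall_eventually_residual_mem_iff {X ι : Type*} [TopologicalSpace X] [Countable ι]
    {B : ι → Set X} (hB : ∀ i, IsMeagre (B i) ∨ IsMeagre (B i)ᶜ) :
    ∃ b : ι → Prop, ∀ᶠ x in residual X, ∀ i, x ∈ B i ↔ b i := by
  have : ∀ i, ∃ p : Prop, ∀ᶠ x in residual X, x ∈ B i ↔ p := fun i ↦ by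
    rcases hB i with h | h
    · exact ⟨False, Eventually.mono h fun x hx ↦ iff_false_intro hx⟩
    · exact ⟨True, Eventually.mono h fun x hx ↦ iff_true_intro (not_not.1 hx)⟩
  choose b hb using this
  exact ⟨b, eventually_countable_forall.2 hb⟩

namespace CantorSpace

theorem exists_cylinder_subset {u : ℕ → Bool} {U : Set (ℕ → Bool)} (hU : U ∈ 𝓝 u) :
    ∃ N, cylinder u N ⊆ U := by
  obtain ⟨_, ⟨x, N, rfl⟩, hux, hsub⟩ := (isTopologicalBasis_cylinders _).mem_nhds_iff.1 hU
  exact ⟨N, mem_cylinder_iff_eq.1 hux ▸ hsub⟩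

def flipOn (s : Finset ℕ) (x : ℕ → Bool) : ℕ → Bool := fun n ↦ xor (x n) (decide (n ∈ s))

variable (s : Finset ℕ) (x : ℕ → Bool)

theorem flipOn_apply_of_notMem {n : ℕ} (hn : n ∉ s) : flipOn s x n = x n := by
  simp [flipOn, hn]

theorem flipOn_apply_of_le {N n : ℕ} (hs : s ⊆ Finset.range N) (hn : N ≤ n) :
    flipOn s x n = x n :=
  flipOn_apply_of_notMem s x fun h ↦ (Finset.mem_range.1 (hs h)).not_ge hn

theorem flipOn_flipOn : flipOn s (flipOn s x) = x := by
  funext n; simp [flipOn]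

theorem continuous_flipOn : Continuous (flipOn s) :=
  continuous_pi fun n ↦
    (continuous_of_discreteTopology (f := (xor · (decide (n ∈ s))))).comp (continuous_apply n)

def flipOnHomeomorph : (ℕ → Bool) ≃ₜ (ℕ → Bool) where
  toFun := flipOn s
  invFun := flipOn s
  left_inv := flipOn_flipOn s
  right_inv := flipOn_flipOn s
  continuous_toFun := continuous_flipOn s
  continuous_invFun := continuous_flipOn s

theorem isMeagre_preimage_flipOn {t : Set (ℕ → Bool)} (ht : IsMeagre t) :
    IsMeagre (flipOn s ⁻¹' t) :=
  ht.preimage_of_isOpenMap (flipOnHomeomorph s).continuous (flipOnHomeomorph s).isOpenMap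

theorem E0_flipOn : E0 x (flipOn s x) := by
  obtain ⟨N, hN⟩ := s.exists_nat_subset_range
  exact ⟨N, fun n hn ↦ (flipOn_apply_of_le s x hN hn).symm⟩

theorem exists_flipOn_mem_cylinder (y : ℕ → Bool) (N : ℕ) :
    ∃ s ⊆ Finset.range N, flipOn s x ∈ cylinder y N := by
  refine ⟨(Finset.range N).filter fun n ↦ x n ≠ y n, Finset.filter_subset _ _, fun n hn ↦ ?_⟩
  simp only [flipOn, Finset.mem_filter, Finset.mem_range, hn, true_and]
  cases x n <;> cases y n <;> rfl

theorem exists_flipOn_eq_of_E0 {y : ℕ → Bool} (hxy : E0 x y) : ∃ s, flipOn s x = y := by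
  obtain ⟨N, hN⟩ := hxy
  obtain ⟨s, hsN, hs⟩ := exists_flipOn_mem_cylinder x y N
  refine ⟨s, funext fun n ↦ ?_⟩
  rcases lt_or_ge n N with hn | hn
  · exact hs n hn
  · rw [flipOn_apply_of_le s x hsN hn, hN n hn]

instance : PerfectSpace (ℕ → Bool) where
  univ_preperfect := preperfect_iff_nhds.2 fun x _ U hU ↦ by
    obtain ⟨N, hN⟩ := exists_cylinder_subset hU
    refine ⟨flipOn {N} x, ⟨hN fun n hn ↦ ?_, trivial⟩, fun h ↦ ?_⟩
    · exact flipOn_apply_of_notMem _ _ (by simpa using hn.ne)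
    · simpa [flipOn] using congrFun h N

theorem isMeagre_setOf_E0 : IsMeagre {y | E0 x y} := by
  have hsub : {y | E0 x y} ⊆ ⋃ s : Finset ℕ, {flipOn s x} := fun y hy ↦ by
    obtain ⟨s, rfl⟩ := exists_flipOn_eq_of_E0 x hy
    exact mem_iUnion.2 ⟨s, rfl⟩
  refine (isMeagre_iUnion fun s ↦ ?_).mono hsub
  exact (isClosed_singleton.isNowhereDense_iff.2 (interior_singleton _)).isMeagre

theorem isMeagre_or_isMeagre_compl_of_E0_invariant {A U : Set (ℕ → Bool)} (hU : IsOpen U)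
    (hAU : IsMeagre (symmDiff A U)) (hA : ∀ x y, E0 x y → (x ∈ A ↔ y ∈ A)) :
    IsMeagre A ∨ IsMeagre Aᶜ := by
  rcases U.eq_empty_or_nonempty with rfl | ⟨u, hu⟩
  · rw [← bot_eq_empty, symmDiff_bot] at hAU
    exact .inl hAU
  obtain ⟨N, hN⟩ := exists_cylinder_subset (hU.mem_nhds hu)
  refine .inr ((isMeagre_iUnion fun s ↦ isMeagre_preimage_flipOn s hAU).mono fun x hx ↦ ?_)
  obtain ⟨s, -, hs⟩ := exists_flipOn_mem_cylinder x u N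
  exact mem_iUnion.2 ⟨s, .inr ⟨hN hs, fun h ↦ hx ((hA _ _ (E0_flipOn s x)).2 h)⟩⟩

end CantorSpace

open CantorSpace

/-- no countable family of sets with the Baire property
separates `E₀`. -/
theorem stmt_2 :
    ¬ ∃ B : ℕ → Set (ℕ → Bool),
      (∀ i : ℕ, ∃ U : Set (ℕ → Bool), IsOpen U ∧ IsMeagre (symmDiff (B i) U)) ∧
      (∀ x y : ℕ → Bool, E0 x y ↔ ∀ i : ℕ, (x ∈ B i ↔ y ∈ B i)) := by
  rintro ⟨B, hB, hsep⟩
  have hB01 : ∀ i, IsMeagre (B i) ∨ IsMeagre (B i)ᶜ := fun i ↦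
    let ⟨_, hU, hBU⟩ := hB i
    isMeagre_or_isMeagre_compl_of_E0_invariant hU hBU fun x y hxy ↦ (hsep x y).1 hxy i
  obtain ⟨b, hb⟩ := exists_forall_eventually_residual_mem_iff hB01
  obtain ⟨x, hx⟩ := (dense_of_mem_residual hb).nonempty
  obtain ⟨y, hy, hxy⟩ := (dense_of_mem_residual (hb.and (isMeagre_setOf_E0 x))).nonempty
  exact hxy ((hsep x y).2 fun i ↦ (hx i).trans (hy i).symm)
end

section
/- Suppose X is a Polish space, (R_n)_{n∈ℕ} is a sequence of F_σ subsets of X × X, Γ is a group of homeomorphisms of X, and O ⊆ X is an orbit of Γ with the property that for every n ∈ ℕ and every open set U ⊆ X intersecting O, there are distinct points x, y ∈ O ∩ U such that O ∩ {z : (x,z) ∈ R_n} ∩ {z : (y,z) ∈ R_n} = ∅. Then there exists a continuous injective map φ : 2^ℕ → closure(O) such that for all y, z ∈ 2^ℕ: if y E₀ z then there is γ ∈ Γ with γ(φ(y)) = φ(z), and if ¬(y E₀ z) then (φ(y), φ(z)) ∉ ⋃_{n∈ℕ} R_n. -/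
/-- A group of homeomorphisms of `X`: a subgroup of the group of
self-homeomorphisms of `X` under composition. -/
def IsHomeoGroup {X : Type*} [TopologicalSpace X] (Γ : Set (X ≃ₜ X)) : Prop :=
  Homeomorph.refl X ∈ Γ ∧ (∀ γ ∈ Γ, γ.symm ∈ Γ) ∧
    ∀ γ₁ ∈ Γ, ∀ γ₂ ∈ Γ, γ₁.trans γ₂ ∈ Γ

/-!
Split every `R n` into closed pieces `C m` and build a Cantor scheme in the orbit closure:
the cell of the binary word `b_{n-1} ⋯ b_0` is `γ₀^{b₀} ∘ ⋯ ∘ γ_{n-1}^{b_{n-1}} '' W n`, where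
the `γ_k^b ∈ Γ` and the closed neighbourhoods `W n` of `x₀` are chosen level by level. At
level `n` the separation hypothesis lets one shrink two disjoint open sets around orbit points,
one closed piece and one pair of level-`n` words at a time, until all cells below different
letters `b ≠ b'` avoid `C 0, …, C n`; a branch pair that is not `E₀`-related differs at
infinitely many levels and so avoids every `C m`. Because `γ_k^b` depends only on the level,
branches that agree from `N` on are mapped into each other by one element of `Γ`, and nested
cells of shrinking diameter make the induced map continuous and injective.
-/

open Set Filter Topology Function
open scoped ENNReal

theorem exists_le_forall_mem_of_exists_le {α ι : Type*} [Preorder α] {P : α → Prop}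
    {Q : ι → α → Prop} (hQ : ∀ i, Antitone (Q i)) {s : Finset ι}
    (h : ∀ i ∈ s, ∀ a, P a → ∃ b ≤ a, P b ∧ Q i b) {a : α} (ha : P a) :
    ∃ b ≤ a, P b ∧ ∀ i ∈ s, Q i b := by
  classical
  induction s using Finset.induction_on with
  | empty => exact ⟨a, le_rfl, ha, by simp⟩
  | insert i s _ ih =>
    obtain ⟨b, hba, hb, hQb⟩ := ih fun j hj => h j (Finset.mem_insert_of_mem hj)
    obtain ⟨c, hcb, hc, hQc⟩ := h i (Finset.mem_insert_self i s) b hb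
    refine ⟨c, hcb.trans hba, hc, (Finset.forall_mem_insert _ _ _).2 ⟨hQc, ?_⟩⟩
    exact fun j hj => hQ j hcb (hQb j hj)

section

variable {X : Type*}

def homeoOrbit [TopologicalSpace X] (Γ : Set (X ≃ₜ X)) (x : X) : Set X :=
  {y | ∃ γ ∈ Γ, γ x = y}

namespace IsHomeoGroup

variable [TopologicalSpace X] {Γ : Set (X ≃ₜ X)}

theorem refl_mem (hΓ : IsHomeoGroup Γ) : Homeomorph.refl X ∈ Γ := hΓ.1

theorem symm_mem (hΓ : IsHomeoGroup Γ) {γ : X ≃ₜ X} (hγ : γ ∈ Γ) : γ.symm ∈ Γ := hΓ.2.1 γ hγ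

theorem trans_mem (hΓ : IsHomeoGroup Γ) {γ δ : X ≃ₜ X} (hγ : γ ∈ Γ) (hδ : δ ∈ Γ) :
    γ.trans δ ∈ Γ :=
  hΓ.2.2 γ hγ δ hδ

theorem mem_homeoOrbit_self (hΓ : IsHomeoGroup Γ) (x : X) : x ∈ homeoOrbit Γ x :=
  ⟨_, hΓ.refl_mem, rfl⟩

theorem mapsTo_homeoOrbit (hΓ : IsHomeoGroup Γ) {γ : X ≃ₜ X} (hγ : γ ∈ Γ) (x : X) :
    MapsTo γ (homeoOrbit Γ x) (homeoOrbit Γ x) := by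
  rintro _ ⟨δ, hδ, rfl⟩
  exact ⟨δ.trans γ, hΓ.trans_mem hδ hγ, rfl⟩

end IsHomeoGroup

section Separation

variable [TopologicalSpace X]

def HasSeparatedPairs (O : Set X) (R : Set (X × X)) : Prop :=
  ∀ U : Set X, IsOpen U → (O ∩ U).Nonempty →
    ∃ x ∈ O ∩ U, ∃ y ∈ O ∩ U, x ≠ y ∧ O ∩ {z | (x, z) ∈ R} ∩ {z | (y, z) ∈ R} = ∅

variable {O : Set X} {R R' : Set (X × X)}

theorem HasSeparatedPairs.mono (hR : HasSeparatedPairs O R) (h : R' ⊆ R) :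
    HasSeparatedPairs O R' := by
  intro U hU hUO
  obtain ⟨x, hx, y, hy, hxy, hxyR⟩ := hR U hU hUO
  refine ⟨x, hx, y, hy, hxy, subset_empty_iff.1 (hxyR ▸ ?_)⟩
  exact inter_subset_inter (inter_subset_inter_right _ fun _ hz => h hz) fun _ hz => h hz

theorem HasSeparatedPairs.exists_notMem (hR : HasSeparatedPairs O R) {U : Set X}
    (hU : IsOpen U) (hUO : (O ∩ U).Nonempty) {z : X} (hz : z ∈ O) :
    ∃ x ∈ O ∩ U, (x, z) ∉ R := by
  obtain ⟨x, hx, y, hy, -, hxy⟩ := hR U hU hUO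
  by_contra! h
  exact (eq_empty_iff_forall_notMem.1 hxy) z ⟨⟨hz, h x hx⟩, h y hy⟩

theorem HasSeparatedPairs.exists_disjoint_pair [T2Space X] (hR : HasSeparatedPairs O R)
    {V : Set X} (hV : IsOpen V) (hVO : (O ∩ V).Nonempty) :
    ∃ U : Bool → Set X, (∀ b, IsOpen (U b) ∧ (O ∩ U b).Nonempty) ∧ (∀ b, U b ⊆ V) ∧
      Disjoint (U false) (U true) := by
  obtain ⟨x, ⟨hxO, hxV⟩, y, ⟨hyO, hyV⟩, hxy, -⟩ := hR V hV hVO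
  obtain ⟨u, v, hu, hv, hxu, hyv, huv⟩ := t2_separation hxy
  refine ⟨fun b => V ∩ bif b then v else u, fun b => ?_, fun b => inter_subset_left,
    huv.mono inter_subset_right inter_subset_right⟩
  cases b
  · exact ⟨hV.inter hu, x, hxO, hxV, hxu⟩
  · exact ⟨hV.inter hv, y, hyO, hyV, hyv⟩

variable {Γ : Set (X ≃ₜ X)}

theorem HasSeparatedPairs.exists_subset_prod_disjoint (hΓ : IsHomeoGroup Γ)
    (hO : ∀ γ ∈ Γ, MapsTo γ O O) (hR : HasSeparatedPairs O R) (hRc : IsClosed R)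
    {γ δ : X ≃ₜ X} (hγ : γ ∈ Γ) (hδ : δ ∈ Γ) {A B : Set X} (hA : IsOpen A) (hB : IsOpen B)
    (hAO : (O ∩ A).Nonempty) (hBO : (O ∩ B).Nonempty) :
    ∃ A' ⊆ A, ∃ B' ⊆ B, IsOpen A' ∧ IsOpen B' ∧ (O ∩ A').Nonempty ∧ (O ∩ B').Nonempty ∧
      Disjoint (A' ×ˢ B') (Prod.map γ δ ⁻¹' R) := by
  obtain ⟨a, haO, haA⟩ := hAO
  obtain ⟨b, hbO, hbB⟩ := hBO
  obtain ⟨x, ⟨hxO, hxA⟩, hxb⟩ := hR.exists_notMem (hA.preimage γ.symm.continuous)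
    ⟨γ a, hO γ hγ haO, by simpa using haA⟩ (hO δ hδ hbO)
  have hopen : IsOpen (Prod.map γ δ ⁻¹' Rᶜ) :=
    hRc.isOpen_compl.preimage (γ.continuous.prodMap δ.continuous)
  obtain ⟨u, v, hu, hv, hxu, hbv, huv⟩ :=
    isOpen_prod_iff.1 hopen (γ.symm x) b (by simpa using hxb)
  refine ⟨A ∩ u, inter_subset_left, B ∩ v, inter_subset_left, hA.inter hu, hB.inter hv,
    ⟨γ.symm x, hO _ (hΓ.symm_mem hγ) hxO, hxA, hxu⟩, ⟨b, hbO, hbB, hbv⟩, ?_⟩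
  exact subset_compl_iff_disjoint_right.1
    ((prod_mono inter_subset_right inter_subset_right).trans huv)

theorem HasSeparatedPairs.exists_le_prod_disjoint (hΓ : IsHomeoGroup Γ)
    (hO : ∀ γ ∈ Γ, MapsTo γ O O) (hR : HasSeparatedPairs O R) (hRc : IsClosed R)
    {γ δ : X ≃ₜ X} (hγ : γ ∈ Γ) (hδ : δ ∈ Γ) (b : Bool) {U : Bool → Set X}
    (hU : ∀ c, IsOpen (U c) ∧ (O ∩ U c).Nonempty) :
    ∃ U' ≤ U, (∀ c, IsOpen (U' c) ∧ (O ∩ U' c).Nonempty) ∧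
      Disjoint (U' b ×ˢ U' (!b)) (Prod.map γ δ ⁻¹' R) := by
  obtain ⟨A, hA, B, hB, hAo, hBo, hAO, hBO, hAB⟩ :=
    hR.exists_subset_prod_disjoint hΓ hO hRc hγ hδ (hU b).1 (hU !b).1 (hU b).2 (hU !b).2
  refine ⟨fun c => if c = b then A else B, fun c => ?_, fun c => ?_, by simpa using hAB⟩ <;>
    obtain rfl | rfl := Bool.eq_or_eq_not c b
  all_goals simp_all

theorem HasSeparatedPairs.exists_family_forall_prod_disjoint [T2Space X] (hΓ : IsHomeoGroup Γ)
    (hO : ∀ γ ∈ Γ, MapsTo γ O O) {C : ℕ → Set (X × X)} (hC : ∀ m, HasSeparatedPairs O (C m))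
    (hCc : ∀ m, IsClosed (C m)) {ι : Type*} {S : Set ι} (hS : S.Finite) {w : ι → X ≃ₜ X}
    (hw : ∀ i ∈ S, w i ∈ Γ) (M : ℕ) {V : Set X} (hV : IsOpen V) (hVO : (O ∩ V).Nonempty) :
    ∃ U : Bool → Set X, (∀ b, IsOpen (U b) ∧ (O ∩ U b).Nonempty) ∧ (∀ b, U b ⊆ V) ∧
      Disjoint (U false) (U true) ∧ ∀ i ∈ S, ∀ j ∈ S, ∀ m < M, ∀ b,
        Disjoint (U b ×ˢ U (!b)) (Prod.map (w i) (w j) ⁻¹' C m) := by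
  classical
  obtain ⟨U₀, hU₀, hU₀V, hU₀d⟩ := (hC 0).exists_disjoint_pair hV hVO
  obtain ⟨U, hUU₀, hU, hUC⟩ := exists_le_forall_mem_of_exists_le (α := Bool → Set X)
    (Q := fun (q : ι × ι × ℕ × Bool) (U : Bool → Set X) =>
      Disjoint (U q.2.2.2 ×ˢ U (!q.2.2.2)) (Prod.map (w q.1) (w q.2.1) ⁻¹' C q.2.2.1))
    (fun q U U' hUU' h => h.mono_left (prod_mono (Pi.le_def.1 hUU' _) (Pi.le_def.1 hUU' _)))
    (s := hS.toFinset ×ˢ hS.toFinset ×ˢ Finset.range M ×ˢ Finset.univ)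
    (fun q hq U hU => by
      simp only [Finset.mem_product, Set.Finite.mem_toFinset] at hq
      exact (hC _).exists_le_prod_disjoint hΓ hO (hCc _) (hw _ hq.1) (hw _ hq.2.1) _ hU)
    hU₀
  refine ⟨U, hU, fun b => (hUU₀ b).trans (hU₀V b), hU₀d.mono (hUU₀ _) (hUU₀ _),
    fun i hi j hj m hm b => hUC (i, j, m, b) ?_⟩
  simp [hi, hj, hm]

end Separation

section Splitting

variable [MetricSpace X] {Γ : Set (X ≃ₜ X)} {x₀ : X} {C : ℕ → Set (X × X)}

theorem exists_splitting (hΓ : IsHomeoGroup Γ)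
    (hC : ∀ m, HasSeparatedPairs (homeoOrbit Γ x₀) (C m)) (hCc : ∀ m, IsClosed (C m))
    {ι : Type*} {S : Set ι} (hS : S.Finite) {w : ι → X ≃ₜ X} (hw : ∀ i ∈ S, w i ∈ Γ)
    {V : Set X} (hV : V ∈ 𝓝 x₀) {ε : ℝ≥0∞} (hε : 0 < ε) (M : ℕ) :
    ∃ (g : Bool → X ≃ₜ X) (W : Set X), (∀ b, g b ∈ Γ) ∧ W ∈ 𝓝 x₀ ∧ IsClosed W ∧
      (∀ b, MapsTo (g b) W V) ∧ Disjoint (g false '' W) (g true '' W) ∧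
      (∀ i ∈ S, ∀ b, MapsTo (w i ∘ g b) W (Metric.closedEBall (w i (g b x₀)) ε)) ∧
      ∀ i ∈ S, ∀ j ∈ S, ∀ m < M, ∀ b, ∀ x ∈ W, ∀ y ∈ W,
        (w i (g b x), w j (g (!b) y)) ∉ C m := by
  obtain ⟨U, hU, hUV, hUd, hUC⟩ := HasSeparatedPairs.exists_family_forall_prod_disjoint hΓ
    (fun γ hγ => hΓ.mapsTo_homeoOrbit hγ x₀) hC hCc hS hw M isOpen_interior
    ⟨x₀, hΓ.mem_homeoOrbit_self x₀, mem_interior_iff_mem_nhds.2 hV⟩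
  choose g hg hgU using fun b => show ∃ γ ∈ Γ, γ x₀ ∈ U b from
    let ⟨_, ⟨γ, hγ, hγx⟩, hU⟩ := (hU b).2; ⟨γ, hγ, hγx ▸ hU⟩
  let K : Set X := ⋂ b, (g b ⁻¹' U b ∩
    ⋂ i ∈ S, (w i ∘ g b) ⁻¹' Metric.eball (w i (g b x₀)) ε)
  have hK : K ∈ 𝓝 x₀ := iInter_mem.2 fun b => inter_mem
    ((g b).continuous.continuousAt.preimage_mem_nhds ((hU b).1.mem_nhds (hgU b)))
    ((biInter_mem hS).2 fun i _ => ((w i).continuous.comp (g b).continuous).continuousAt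
      |>.preimage_mem_nhds (Metric.eball_mem_nhds _ hε))
  obtain ⟨W, hW, hWc, hWK⟩ := exists_mem_nhds_isClosed_subset hK
  have hWU : ∀ b, MapsTo (g b) W (U b) := fun b x hx => (mem_iInter.1 (hWK hx) b).1
  refine ⟨g, W, hg, hW, hWc, fun b => (hWU b).mono_right ((hUV b).trans interior_subset),
    hUd.mono (image_subset_iff.2 (hWU _)) (image_subset_iff.2 (hWU _)),
    fun i hi b x hx => Metric.eball_subset_closedEBall
      (mem_iInter₂.1 (mem_iInter.1 (hWK hx) b).2 i hi),
    fun i hi j hj m hm b x hx y hy => disjoint_left.1 (hUC i hi j hj m hm b)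
      (mk_mem_prod (hWU b hx) (hWU (!b) hy))⟩

end Splitting

section Words

variable [TopologicalSpace X] {Γ : Set (X ≃ₜ X)}

def word (g : ℕ → Bool → X ≃ₜ X) : List Bool → X ≃ₜ X
  | [] => Homeomorph.refl X
  | b :: s => (g s.length b).trans (word g s)

variable {g : ℕ → Bool → X ≃ₜ X}

@[simp]
theorem word_cons_apply (b : Bool) (s : List Bool) (x : X) :
    word g (b :: s) x = word g s (g s.length b x) :=
  rfl

theorem word_mem (hΓ : IsHomeoGroup Γ) (hg : ∀ n b, g n b ∈ Γ) : ∀ l, word g l ∈ Γ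
  | [] => hΓ.refl_mem
  | b :: s => hΓ.trans_mem (hg _ b) (word_mem hΓ hg s)

open PiNat in
theorem word_res_eq_of_eventuallyEq {y z : ℕ → Bool} {N : ℕ} (h : ∀ n ≥ N, y n = z n)
    {m : ℕ} (hm : N ≤ m) (x : X) :
    word g (res z m) x = word g (res z N) ((word g (res y N)).symm (word g (res y m) x)) := by
  induction m, hm using Nat.le_induction generalizing x with
  | base => simp
  | succ m hm ih => simp [ih, h m hm]

/-- Level `n` holds the homeomorphisms attached to the words of length `n` and the `n`-th
neighbourhood; level `n + 1` is computed from level `n` by the choice functions `G` and `W`. -/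
def levels (G : ℕ → (List Bool → X ≃ₜ X) × Set X → Bool → X ≃ₜ X)
    (W : ℕ → (List Bool → X ≃ₜ X) × Set X → Set X) (W₀ : Set X) :
    ℕ → (List Bool → X ≃ₜ X) × Set X
  | 0 => (fun _ => Homeomorph.refl X, W₀)
  | n + 1 =>
    let σ := levels G W W₀ n
    (fun l => l.casesOn (Homeomorph.refl X) fun b s => (G n σ b).trans (σ.1 s), W n σ)

theorem word_levels (G : ℕ → (List Bool → X ≃ₜ X) × Set X → Bool → X ≃ₜ X)
    (W : ℕ → (List Bool → X ≃ₜ X) × Set X → Set X) (W₀ : Set X) (s : List Bool) :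
    word (fun n => G n (levels G W W₀ n)) s = (levels G W W₀ s.length).1 s := by
  induction s with
  | nil => rfl
  | cons b s ih => exact congrArg (G s.length _ b).trans ih

end Words

/-- All words of a given length use the same homeomorphisms `g n b`; this is what makes
`E₀`-equivalent branches `Γ`-related. -/
structure OrbitScheme [MetricSpace X] (Γ : Set (X ≃ₜ X)) (x₀ : X) (C : ℕ → Set (X × X)) where
  g : ℕ → Bool → X ≃ₜ X
  W : ℕ → Set X
  g_mem : ∀ n b, g n b ∈ Γ
  W_mem_nhds : ∀ n, W n ∈ 𝓝 x₀
  isClosed_W : ∀ n, IsClosed (W n)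
  mapsTo : ∀ n b, MapsTo (g n b) (W (n + 1)) (W n)
  disjoint : ∀ n, Disjoint (g n false '' W (n + 1)) (g n true '' W (n + 1))
  mapsTo_closedEBall : ∀ l : List Bool,
    MapsTo (word g l) (W l.length) (Metric.closedEBall (word g l x₀) (2⁻¹ ^ l.length))
  notMem : ∀ s t : List Bool, s.length = t.length → ∀ m ≤ s.length, ∀ b,
    ∀ x ∈ W (s.length + 1), ∀ y ∈ W (s.length + 1),
      (word g (b :: s) x, word g ((!b) :: t) y) ∉ C m

namespace OrbitScheme

open CantorScheme PiNat Metric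

variable [MetricSpace X] {Γ : Set (X ≃ₜ X)} {x₀ : X} {C : ℕ → Set (X × X)}
  (S : OrbitScheme Γ x₀ C)

def cell (l : List Bool) : Set X := word S.g l '' S.W l.length

theorem cell_cons (b : Bool) (s : List Bool) :
    S.cell (b :: s) = word S.g s '' (S.g s.length b '' S.W (s.length + 1)) := by
  rw [cell, List.length_cons, image_image]
  rfl

theorem closureAntitone : ClosureAntitone S.cell :=
  Antitone.closureAntitone
    (fun s b => by rw [cell_cons]; exact image_mono (S.mapsTo _ b).image_subset)
    fun l => (word S.g l).isClosedMap _ (S.isClosed_W _)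

theorem cantorDisjoint : CantorScheme.Disjoint S.cell := by
  intro s a b hab
  rw [cell_cons, cell_cons, disjoint_image_iff (word S.g s).injective]
  cases a <;> cases b
  · exact absurd rfl hab
  · exact S.disjoint _
  · exact (S.disjoint _).symm
  · exact absurd rfl hab

theorem ediam_cell_le (l : List Bool) : ediam (S.cell l) ≤ 2 * 2⁻¹ ^ l.length :=
  (ediam_mono (S.mapsTo_closedEBall l).image_subset).trans ediam_closedEBall_le

theorem vanishingDiam : VanishingDiam S.cell := by
  intro c
  have h : Tendsto (fun n : ℕ => (2 : ℝ≥0∞) * 2⁻¹ ^ n) atTop (𝓝 (2 * 0)) :=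
    ENNReal.Tendsto.const_mul (ENNReal.tendsto_pow_atTop_nhds_zero_of_lt_one (by norm_num))
      (.inr (by norm_num))
  rw [mul_zero] at h
  refine tendsto_of_tendsto_of_tendsto_of_le_of_le tendsto_const_nhds h (fun _ => bot_le)
    fun n => ?_
  simpa using S.ediam_cell_le (res c n)

theorem word_mem_cell (l : List Bool) : word S.g l x₀ ∈ S.cell l :=
  mem_image_of_mem _ (mem_of_mem_nhds (S.W_mem_nhds _))

variable [CompleteSpace X]

theorem inducedMap_fst : (inducedMap S.cell).1 = univ :=
  ClosureAntitone.map_of_vanishingDiam S.vanishingDiam S.closureAntitone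
    fun l => ⟨_, S.word_mem_cell l⟩

noncomputable def map (c : ℕ → Bool) : X :=
  (inducedMap S.cell).2 ⟨c, S.inducedMap_fst ▸ mem_univ c⟩

theorem map_mem_cell (c : ℕ → Bool) (n : ℕ) : S.map c ∈ S.cell (res c n) :=
  map_mem _ n

theorem continuous_map : Continuous S.map :=
  S.vanishingDiam.map_continuous.comp (continuous_id.subtype_mk _)

theorem injective_map : Injective S.map :=
  fun _ _ h => congrArg Subtype.val (S.cantorDisjoint.map_injective h)

theorem edist_map_le (c : ℕ → Bool) (n : ℕ) :
    edist (S.map c) (word S.g (res c n) x₀) ≤ 2⁻¹ ^ n := by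
  obtain ⟨x, hx, hxc⟩ := S.map_mem_cell c n
  simpa [← hxc] using S.mapsTo_closedEBall (res c n) hx

theorem tendsto_word (c : ℕ → Bool) :
    Tendsto (fun n => word S.g (res c n) x₀) atTop (𝓝 (S.map c)) := by
  rw [tendsto_iff_edist_tendsto_0]
  refine tendsto_of_tendsto_of_tendsto_of_le_of_le tendsto_const_nhds
    (ENNReal.tendsto_pow_atTop_nhds_zero_of_lt_one (r := 2⁻¹) (by norm_num))
    (fun _ => bot_le) fun n => ?_
  rw [edist_comm]
  exact S.edist_map_le c n

theorem map_mem_closure (hΓ : IsHomeoGroup Γ) (c : ℕ → Bool) :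
    S.map c ∈ closure (homeoOrbit Γ x₀) :=
  mem_closure_of_tendsto (S.tendsto_word c)
    (Eventually.of_forall fun _ => ⟨_, word_mem hΓ S.g_mem _, rfl⟩)

theorem exists_apply_map_eq (hΓ : IsHomeoGroup Γ) {y z : ℕ → Bool} (h : E0 y z) :
    ∃ γ ∈ Γ, γ (S.map y) = S.map z := by
  obtain ⟨N, hN⟩ := h
  let γ := (word S.g (res y N)).symm.trans (word S.g (res z N))
  have hγ : γ ∈ Γ :=
    hΓ.trans_mem (hΓ.symm_mem (word_mem hΓ S.g_mem _)) (word_mem hΓ S.g_mem _)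
  refine ⟨γ, hγ, tendsto_nhds_unique ?_ (S.tendsto_word z)⟩
  refine ((γ.continuous.tendsto _).comp (S.tendsto_word y)).congr' ?_
  filter_upwards [eventually_ge_atTop N] with m hm
  exact (word_res_eq_of_eventuallyEq hN hm x₀).symm

theorem map_notMem {y z : ℕ → Bool} (h : ¬ E0 y z) (m : ℕ) : (S.map y, S.map z) ∉ C m := by
  have hne : ∀ N, ∃ k ≥ N, y k ≠ z k := by simpa [E0] using h
  obtain ⟨k, hk, hyz⟩ := hne m
  obtain ⟨x, hx, hxy⟩ := S.map_mem_cell y (k + 1)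
  obtain ⟨x', hx', hx'z⟩ := S.map_mem_cell z (k + 1)
  simp only [res_succ, List.length_cons, res_length] at hx hx' hxy hx'z
  rw [← hxy, ← hx'z, Bool.eq_not_iff.2 hyz.symm]
  exact S.notMem (res y k) (res z k) (by simp) m (by simpa using hk) (y k) x (by simpa) x'
    (by simpa)

end OrbitScheme

section Construction

open Metric

variable [MetricSpace X] {Γ : Set (X ≃ₜ X)} {x₀ : X} {C : ℕ → Set (X × X)}

theorem exists_orbitScheme (hΓ : IsHomeoGroup Γ)
    (hC : ∀ m, HasSeparatedPairs (homeoOrbit Γ x₀) (C m)) (hCc : ∀ m, IsClosed (C m)) :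
    Nonempty (OrbitScheme Γ x₀ C) := by
  choose! g W hg hW hWc hmaps hdisj hsmall hsep using
    fun (n : ℕ) (σ : (List Bool → X ≃ₜ X) × Set X)
      (hσ : ∀ s : List Bool, s.length = n → σ.1 s ∈ Γ) (hV : σ.2 ∈ 𝓝 x₀) =>
    exists_splitting hΓ hC hCc (List.finite_length_eq Bool n) hσ hV
      (ε := 2⁻¹ ^ (n + 1)) (ENNReal.pow_pos (by norm_num) _) (n + 1)
  let level := levels g W (closedEBall x₀ 1)
  have hlevel : ∀ n, (∀ s : List Bool, s.length = n → (level n).1 s ∈ Γ) ∧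
      (level n).2 ∈ 𝓝 x₀ := by
    intro n
    induction n with
    | zero => exact ⟨fun _ _ => hΓ.refl_mem, closedEBall_mem_nhds _ one_pos⟩
    | succ n ih =>
      refine ⟨fun l hl => ?_, hW n _ ih.1 ih.2⟩
      obtain _ | ⟨b, s⟩ := l
      · simp at hl
      · exact hΓ.trans_mem (hg n _ ih.1 ih.2 b) (ih.1 s (by simpa using hl))
  have hword := word_levels g W (closedEBall x₀ 1)
  refine ⟨{
    g := fun n => g n (level n)
    W := fun n => (level n).2
    g_mem := fun n => hg n _ (hlevel n).1 (hlevel n).2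
    W_mem_nhds := fun n => (hlevel n).2
    isClosed_W := fun n => n.casesOn isClosed_closedEBall
      fun n => hWc n _ (hlevel n).1 (hlevel n).2
    mapsTo := fun n => hmaps n _ (hlevel n).1 (hlevel n).2
    disjoint := fun n => hdisj n _ (hlevel n).1 (hlevel n).2
    mapsTo_closedEBall := ?_
    notMem := ?_ }⟩
  · rintro (_ | ⟨b, s⟩)
    · intro x hx
      simpa [word] using (show x ∈ closedEBall x₀ 1 from hx)
    · intro x hx
      rw [mem_closedEBall, word_cons_apply, word_cons_apply, hword]
      exact hsmall _ _ (hlevel _).1 (hlevel _).2 s rfl b hx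
  · intro s t hst m hm b x hx y hy
    rw [word_cons_apply, word_cons_apply, hword, hword, ← hst]
    exact hsep _ _ (hlevel _).1 (hlevel _).2 s rfl t hst.symm m (Nat.lt_succ_of_le hm) b x hx y hy

theorem exists_continuous_injective_E0 [CompleteSpace X] (hΓ : IsHomeoGroup Γ)
    (hC : ∀ m, HasSeparatedPairs (homeoOrbit Γ x₀) (C m)) (hCc : ∀ m, IsClosed (C m)) :
    ∃ φ : (ℕ → Bool) → X, Continuous φ ∧ Injective φ ∧
      (∀ c, φ c ∈ closure (homeoOrbit Γ x₀)) ∧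
      ∀ y z, (E0 y z → ∃ γ ∈ Γ, γ (φ y) = φ z) ∧ (¬ E0 y z → ∀ m, (φ y, φ z) ∉ C m) := by
  obtain ⟨S⟩ := exists_orbitScheme hΓ hC hCc
  exact ⟨S.map, S.continuous_map, S.injective_map, S.map_mem_closure hΓ,
    fun y z => ⟨S.exists_apply_map_eq hΓ, S.map_notMem⟩⟩

end Construction

end

/-- embedding of `(E₀, ∼E₀)` into `(E_Γ, ∼⋃ₙ Rₙ)` inside the
closure of a suitable orbit. -/
theorem stmt_6 {X : Type*} [TopologicalSpace X] [PolishSpace X]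
    (R : ℕ → Set (X × X))
    (hR : ∀ n : ℕ, ∃ F : ℕ → Set (X × X), (∀ k, IsClosed (F k)) ∧ R n = ⋃ k, F k)
    (Γ : Set (X ≃ₜ X)) (hΓ : IsHomeoGroup Γ)
    (O : Set X) (hO : ∃ x₀ : X, O = {y : X | ∃ γ ∈ Γ, γ x₀ = y})
    (hsep : ∀ (n : ℕ) (U : Set X), IsOpen U → (O ∩ U).Nonempty →
      ∃ x ∈ O ∩ U, ∃ y ∈ O ∩ U, x ≠ y ∧
        O ∩ {z : X | (x, z) ∈ R n} ∩ {z : X | (y, z) ∈ R n} = ∅) :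
    ∃ φ : (ℕ → Bool) → X, Continuous φ ∧ Function.Injective φ ∧
      (∀ c : ℕ → Bool, φ c ∈ closure O) ∧
      ∀ y z : ℕ → Bool,
        (E0 y z → ∃ γ ∈ Γ, γ (φ y) = φ z) ∧
        (¬ E0 y z → (φ y, φ z) ∉ ⋃ n, R n) := by
  let := TopologicalSpace.upgradeIsCompletelyMetrizable X
  obtain ⟨x₀, rfl⟩ := hO
  choose F hFc hRF using hR
  let C : ℕ → Set (X × X) := fun m => F m.unpair.1 m.unpair.2
  have hC : ∀ m, HasSeparatedPairs (homeoOrbit Γ x₀) (C m) := fun m =>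
    HasSeparatedPairs.mono (hsep m.unpair.1) (by rw [hRF]; exact subset_iUnion (F _) _)
  obtain ⟨φ, hφc, hφi, hφO, hφE⟩ :=
    exists_continuous_injective_E0 hΓ hC fun m => hFc _ _
  refine ⟨φ, hφc, hφi, hφO, fun y z => ⟨(hφE y z).1, fun hyz hmem => ?_⟩⟩
  obtain ⟨n, hn⟩ := mem_iUnion.1 hmem
  rw [hRF] at hn
  obtain ⟨k, hk⟩ := mem_iUnion.1 hn
  exact (hφE y z).2 hyz (Nat.pair n k) (by simpa [C] using hk)
end
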